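/- arXiv:2409.17859 — 4 statements merged into one kernel-verified Lean document; each statement's English description precedes it below -/
import Mathlib

section
/- Let ϑ ∈ (0, 1/2], y ∈ ℝ, k ∈ ℕ, η ∈ (0, 1/4), and let a₁, …, a_k > 0 with the convention a₀ = a_{k+1} = 0. Let ρ(ζ) = 2/(2+ζ²). Then for every z ∈ C^{k+1}_ub(ℝ) whose derivatives up to order k+1 are square-integrable against ρ(ϑ(·+y)), the interpolation inequality Σ_{j=1}^{k} ((3/4)a_j - (η/2)a_{j-1} - (1/2)a_{j+1}(1/η + 1/2)) ∫_ℝ ρ(ϑ(ζ+y)) |∂_ζʲz(ζ)|² dζ ≤ (η/2)a_k ∫_ℝ ρ(ϑ(ζ+y)) |∂_ζ^{k+1}z(ζ)|² dζ + (1/2)a₁(1/η + 1/2) ∫_ℝ ρ(ϑ(ζ+y)) |z(ζ)|² dζ holds. -/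
open MeasureTheory Finset

/-!
Write `w ζ = ρ (ϑ (ζ + y))`. Since `|ρ'| ≤ ρ` and `ϑ ≤ 1/2`, `|w'| ≤ w / 2`. For consecutive
derivatives `f`, `g = f'`, `h = g'`, the function `w g f` and its derivative
`w' g f + w h f + w g²` are integrable, so the latter integrates to zero; bounding the two cross
terms by AM-GM and by Young's inequality with parameter `η` gives
`(3/4) ∫ w g² ≤ (η/2) ∫ w h² + (1/(2η) + 1/4) ∫ w f²`.
Multiplying the inequality at level `j` by `aⱼ ≥ 0` and summing over `j`, the reindexed
cross sums telescope, leaving only the boundary terms, because `a₀ = a_{k+1} = 0`.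
-/

theorem hasDerivAt_two_div_two_add_sq (u : ℝ) :
    HasDerivAt (fun u : ℝ => 2 / (2 + u ^ 2)) (-(4 * u) / (2 + u ^ 2) ^ 2) u := by
  refine ((hasDerivAt_const u (2 : ℝ)).div ((hasDerivAt_pow 2 u).const_add 2)
    (by positivity)).congr_deriv ?_
  push_cast
  ring

theorem abs_neg_four_mul_div_le (u : ℝ) : |-(4 * u) / (2 + u ^ 2) ^ 2| ≤ 2 / (2 + u ^ 2) := by
  have hpos : 0 < 2 + u ^ 2 := by positivity
  rw [abs_div, abs_neg, abs_of_pos (pow_pos hpos 2), div_le_div_iff₀ (pow_pos hpos 2) hpos,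
    abs_mul, abs_of_pos four_pos]
  nlinarith [sq_nonneg (|u| - 1), sq_abs u, abs_nonneg u]

theorem ContDiff.hasDerivAt_iteratedDeriv {f : ℝ → ℝ} {n : ℕ} (hf : ContDiff ℝ n f) {i : ℕ}
    (hi : i < n) (x : ℝ) : HasDerivAt (iteratedDeriv i f) (iteratedDeriv (i + 1) f x) x := by
  rw [iteratedDeriv_succ]
  exact (hf.differentiable_iteratedDeriv i (by exact_mod_cast hi) x).hasDerivAt

theorem abs_mul_mul_le_of_abs_le {v w p q C : ℝ} (hv : |v| ≤ C * w) :
    |v * p * q| ≤ C / 2 * (w * p ^ 2 + w * q ^ 2) := by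
  have hCw : 0 ≤ C * w := (abs_nonneg _).trans hv
  have hpq : 2 * (|p| * |q|) ≤ p ^ 2 + q ^ 2 := by
    simpa [sq_abs, mul_assoc] using two_mul_le_add_sq |p| |q|
  rw [abs_mul, abs_mul, mul_assoc]
  nlinarith [mul_le_mul_of_nonneg_right hv (mul_nonneg (abs_nonneg p) (abs_nonneg q)),
    mul_le_mul_of_nonneg_left hpq hCw]

theorem neg_mul_mul_le_young {w p q η : ℝ} (hw : 0 ≤ w) (hη : 0 < η) :
    -(w * p * q) ≤ η / 2 * (w * p ^ 2) + 1 / (2 * η) * (w * q ^ 2) := by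
  have hsq : η / 2 * (w * p ^ 2) + 1 / (2 * η) * (w * q ^ 2) + w * p * q
      = w * (η * p + q) ^ 2 / (2 * η) := by
    field_simp
    ring
  have : 0 ≤ w * (η * p + q) ^ 2 / (2 * η) := by positivity
  linarith

theorem integrable_mul_mul_of_abs_le {α : Type*} [MeasurableSpace α] {μ : Measure α}
    {v w p q : α → ℝ} {C : ℝ} (hv : AEStronglyMeasurable v μ) (hp : AEStronglyMeasurable p μ)
    (hq : AEStronglyMeasurable q μ) (hvw : ∀ x, |v x| ≤ C * w x)
    (hwp : Integrable (fun x => w x * p x ^ 2) μ) (hwq : Integrable (fun x => w x * q x ^ 2) μ) :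
    Integrable (fun x => v x * p x * q x) μ :=
  Integrable.mono' ((hwp.add hwq).const_mul (C / 2)) ((hv.mul hp).mul hq)
    (Filter.Eventually.of_forall fun x => abs_mul_mul_le_of_abs_le (hvw x))

theorem integral_weight_mul_sq_deriv_le {w w' f g h : ℝ → ℝ} {θ η : ℝ} (hη : 0 < η)
    (hw : ∀ x, HasDerivAt w (w' x) x) (hw_nonneg : ∀ x, 0 ≤ w x)
    (hw' : ∀ x, |w' x| ≤ θ * w x)
    (hf : ∀ x, HasDerivAt f (g x) x) (hg : ∀ x, HasDerivAt g (h x) x)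
    (hwf : Integrable fun x => w x * f x ^ 2) (hwg : Integrable fun x => w x * g x ^ 2)
    (hwh : Integrable fun x => w x * h x ^ 2) :
    (1 - θ / 2) * (∫ x, w x * g x ^ 2) ≤
      η / 2 * (∫ x, w x * h x ^ 2) + (1 / (2 * η) + θ / 2) * (∫ x, w x * f x ^ 2) := by
  have meas_deriv {u u' : ℝ → ℝ} (hu : ∀ x, HasDerivAt u (u' x) x) :
      AEStronglyMeasurable u' := by
    rw [show u' = deriv u from funext fun x => (hu x).deriv.symm]
    exact (measurable_deriv u).aestronglyMeasurable
  have meas {u u' : ℝ → ℝ} (hu : ∀ x, HasDerivAt u (u' x) x) : AEStronglyMeasurable u :=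
    (continuous_iff_continuousAt.2 fun x => (hu x).continuousAt).aestronglyMeasurable
  have hw_abs : ∀ x, |w x| ≤ 1 * w x := fun x => by rw [one_mul, abs_of_nonneg (hw_nonneg x)]
  have int_w'gf : Integrable fun x => w' x * g x * f x :=
    integrable_mul_mul_of_abs_le (meas_deriv hw) (meas hg) (meas hf) hw' hwg hwf
  have int_whf : Integrable fun x => w x * h x * f x :=
    integrable_mul_mul_of_abs_le (meas hw) (meas_deriv hg) (meas hf) hw_abs hwh hwf
  have int_wgf : Integrable fun x => w x * g x * f x :=
    integrable_mul_mul_of_abs_le (meas hw) (meas hg) (meas hf) hw_abs hwg hwf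
  have hibp : (∫ x, w' x * g x * f x) + (∫ x, w x * h x * f x) + (∫ x, w x * g x ^ 2) = 0 := by
    rw [← integral_add int_w'gf int_whf, ← integral_add
      (f := fun x => w' x * g x * f x + w x * h x * f x) (int_w'gf.add int_whf) hwg]
    exact integral_eq_zero_of_hasDerivAt_of_integrable
      (fun x => (((hw x).mul (hg x)).mul (hf x)).congr_deriv (by simp only [Pi.mul_apply]; ring))
      ((int_w'gf.add int_whf).add hwg) int_wgf
  have hcross_w' : -(∫ x, w' x * g x * f x) ≤
      θ / 2 * (∫ x, w x * g x ^ 2) + θ / 2 * (∫ x, w x * f x ^ 2) := by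
    have := integral_mono int_w'gf.neg ((hwg.const_mul (θ / 2)).add (hwf.const_mul (θ / 2)))
      fun x => (neg_le_abs _).trans
        ((abs_mul_mul_le_of_abs_le (hw' x)).trans_eq (mul_add _ _ _))
    simp only [Pi.neg_apply, Pi.add_apply] at this
    rwa [integral_neg, integral_add (hwg.const_mul _) (hwf.const_mul _), integral_const_mul,
      integral_const_mul] at this
  have hcross_h : -(∫ x, w x * h x * f x) ≤
      η / 2 * (∫ x, w x * h x ^ 2) + 1 / (2 * η) * (∫ x, w x * f x ^ 2) := by
    have := integral_mono int_whf.neg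
      ((hwh.const_mul (η / 2)).add (hwf.const_mul (1 / (2 * η))))
      fun x => neg_mul_mul_le_young (hw_nonneg x) hη
    simp only [Pi.neg_apply, Pi.add_apply] at this
    rwa [integral_neg, integral_add (hwh.const_mul _) (hwf.const_mul _), integral_const_mul,
      integral_const_mul] at this
  rw [sub_mul, one_mul, add_mul]
  linarith

theorem integral_window_mul_sq_iteratedDeriv_le {ϑ η : ℝ} (y : ℝ) (hϑ : |ϑ| ≤ 1 / 2)
    (hη : 0 < η) {z : ℝ → ℝ} {n i : ℕ} (hz : ContDiff ℝ n z) (hi : i + 2 ≤ n)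
    (hint : ∀ j ≤ i + 2,
      Integrable fun ζ => 2 / (2 + (ϑ * (ζ + y)) ^ 2) * iteratedDeriv j z ζ ^ 2) :
    3 / 4 * (∫ ζ, 2 / (2 + (ϑ * (ζ + y)) ^ 2) * iteratedDeriv (i + 1) z ζ ^ 2)
      ≤ η / 2 * (∫ ζ, 2 / (2 + (ϑ * (ζ + y)) ^ 2) * iteratedDeriv (i + 2) z ζ ^ 2)
        + 1 / 2 * (1 / η + 1 / 2) *
          (∫ ζ, 2 / (2 + (ϑ * (ζ + y)) ^ 2) * iteratedDeriv i z ζ ^ 2) := by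
  have hw (ζ : ℝ) : HasDerivAt (fun ζ => 2 / (2 + (ϑ * (ζ + y)) ^ 2))
      (-(4 * (ϑ * (ζ + y))) / (2 + (ϑ * (ζ + y)) ^ 2) ^ 2 * (ϑ * 1)) ζ :=
    (hasDerivAt_two_div_two_add_sq _).comp ζ (((hasDerivAt_id ζ).add_const y).const_mul ϑ)
  have hw' (ζ : ℝ) : |-(4 * (ϑ * (ζ + y))) / (2 + (ϑ * (ζ + y)) ^ 2) ^ 2 * (ϑ * 1)|
      ≤ 1 / 2 * (2 / (2 + (ϑ * (ζ + y)) ^ 2)) := by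
    rw [abs_mul, mul_one, mul_comm (1 / 2)]
    exact mul_le_mul (abs_neg_four_mul_div_le _) hϑ (abs_nonneg ϑ) (by positivity)
  have := integral_weight_mul_sq_deriv_le hη hw (fun ζ => by positivity) hw'
    (hz.hasDerivAt_iteratedDeriv (by omega)) (hz.hasDerivAt_iteratedDeriv (by omega))
    (hint i (by omega)) (hint (i + 1) (by omega)) (hint (i + 2) (by omega))
  convert this using 2
  · norm_num
  · ring

theorem sum_Icc_one_sub_telescope {M : Type*} [AddCommGroup M] (b : ℕ → M) (k : ℕ) :
    ∑ j ∈ Icc 1 k, (b (j + 1) - b j) = b (k + 1) - b 1 := by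
  rw [← Ico_add_one_right_eq_Icc, sum_Ico_sub b (by omega)]

theorem sum_mul_le_of_three_term_le {α β c : ℝ} {k : ℕ} {a I : ℕ → ℝ}
    (ha0 : a 0 = 0) (hak : a (k + 1) = 0) (ha : ∀ j ∈ Icc 1 k, 0 ≤ a j)
    (hI : ∀ j ∈ Icc 1 k, α * I j ≤ β * I (j + 1) + c * I (j - 1)) :
    ∑ j ∈ Icc 1 k, (α * a j - β * a (j - 1) - c * a (j + 1)) * I j
      ≤ β * a k * I (k + 1) + c * a 1 * I 0 := by
  have hsplit : ∀ j ∈ Icc 1 k, (α * a j - β * a (j - 1) - c * a (j + 1)) * I j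
      = a j * (α * I j - β * I (j + 1) - c * I (j - 1))
        + β * (a j * I (j + 1) - a (j - 1) * I j) - c * (a (j + 1) * I j - a j * I (j - 1)) :=
    fun j _ => by ring
  have hup := sum_Icc_one_sub_telescope (fun j => a (j - 1) * I j) k
  have hdown := sum_Icc_one_sub_telescope (fun j => a j * I (j - 1)) k
  simp only [Nat.add_sub_cancel, Nat.sub_self, ha0, hak, zero_mul, sub_zero, zero_sub] at hup hdown
  have hlevel : ∑ j ∈ Icc 1 k, a j * (α * I j - β * I (j + 1) - c * I (j - 1)) ≤ 0 :=
    sum_nonpos fun j hj => mul_nonpos_of_nonneg_of_nonpos (ha j hj) (by linarith [hI j hj])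
  rw [sum_congr rfl hsplit, sum_sub_distrib, sum_add_distrib, ← mul_sum, ← mul_sum, hup, hdown]
  linarith

theorem weighted_interpolation_inequality_general
    (ϑ : ℝ) (hϑ : ϑ ∈ Set.Ioc (0:ℝ) (1/2)) (y : ℝ)
    (k : ℕ)
    (η : ℝ) (hη : η ∈ Set.Ioo (0:ℝ) (1/4))
    (a : ℕ → ℝ) (ha0 : a 0 = 0) (hak1 : a (k+1) = 0)
    (hapos : ∀ j : ℕ, 1 ≤ j → j ≤ k → 0 < a j)
    (ρ : ℝ → ℝ) (hρ : ∀ ζ : ℝ, ρ ζ = 2 / (2 + ζ^2))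
    (z : ℝ → ℝ) (hz : ContDiff ℝ (↑(k+1)) z)
    (hzint : ∀ j ≤ k+1,
      Integrable (fun ζ => ρ (ϑ * (ζ + y)) * (iteratedDeriv j z ζ)^2)) :
    ∑ j ∈ Finset.Icc 1 k,
        ((3/4) * a j - (η/2) * a (j-1) - (1/2) * a (j+1) * (1/η + 1/2)) *
          ∫ ζ : ℝ, ρ (ϑ * (ζ + y)) * (iteratedDeriv j z ζ)^2
      ≤ (η/2) * a k * (∫ ζ : ℝ, ρ (ϑ * (ζ + y)) * (iteratedDeriv (k+1) z ζ)^2)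
        + (1/2) * a 1 * (1/η + 1/2) * ∫ ζ : ℝ, ρ (ϑ * (ζ + y)) * (z ζ)^2 := by
  obtain rfl : ρ = fun u => 2 / (2 + u ^ 2) := funext hρ
  have hϑ' : |ϑ| ≤ 1 / 2 := by rw [abs_of_pos hϑ.1]; exact hϑ.2
  have hlevel : ∀ j ∈ Icc 1 k,
      3 / 4 * (∫ ζ, 2 / (2 + (ϑ * (ζ + y)) ^ 2) * iteratedDeriv j z ζ ^ 2)
        ≤ η / 2 * (∫ ζ, 2 / (2 + (ϑ * (ζ + y)) ^ 2) * iteratedDeriv (j + 1) z ζ ^ 2)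
          + 1 / 2 * (1 / η + 1 / 2) *
            (∫ ζ, 2 / (2 + (ϑ * (ζ + y)) ^ 2) * iteratedDeriv (j - 1) z ζ ^ 2) := by
    intro j hj
    obtain ⟨i, rfl⟩ : ∃ i, j = i + 1 := ⟨j - 1, by grind⟩
    exact integral_window_mul_sq_iteratedDeriv_le y hϑ' hη.1 hz (by grind)
      fun j hj' => hzint j (by grind)
  have := sum_mul_le_of_three_term_le ha0 hak1
    (fun j hj => (hapos j (mem_Icc.1 hj).1 (mem_Icc.1 hj).2).le) hlevel
  simp only [iteratedDeriv_zero] at this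
  convert this using 1
  · exact sum_congr rfl fun j _ => by ring
  · ring

/-- The weighted interpolation inequality obtained by integration by
parts and Young's inequality, for the window `ρ(ζ) = 2/(2+ζ²)`, dilation `ϑ ∈ (0,1/2]`,
translate `y`, coefficients `a₁,…,a_k > 0` (with `a₀ = a_{k+1} = 0`) and `η ∈ (0,1/4)`. -/
theorem weighted_interpolation_inequality
    (ϑ : ℝ) (hϑ : ϑ ∈ Set.Ioc (0:ℝ) (1/2)) (y : ℝ)
    (k : ℕ) (hk : 1 ≤ k)
    (η : ℝ) (hη : η ∈ Set.Ioo (0:ℝ) (1/4))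
    (a : ℕ → ℝ) (ha0 : a 0 = 0) (hak1 : a (k+1) = 0)
    (hapos : ∀ j : ℕ, 1 ≤ j → j ≤ k → 0 < a j)
    (ρ : ℝ → ℝ) (hρ : ∀ ζ : ℝ, ρ ζ = 2 / (2 + ζ^2))
    (z : ℝ → ℝ) (hz : ContDiff ℝ (↑(k+1)) z)
    (hzb : ∀ j ≤ k+1, ∃ M : ℝ, ∀ ζ, |iteratedDeriv j z ζ| ≤ M)
    (hzu : ∀ j ≤ k+1, UniformContinuous (iteratedDeriv j z))
    (hzint : ∀ j ≤ k+1,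
      Integrable (fun ζ => ρ (ϑ * (ζ + y)) * (iteratedDeriv j z ζ)^2)) :
    ∑ j ∈ Finset.Icc 1 k,
        ((3/4) * a j - (η/2) * a (j-1) - (1/2) * a (j+1) * (1/η + 1/2)) *
          ∫ ζ : ℝ, ρ (ϑ * (ζ + y)) * (iteratedDeriv j z ζ)^2
      ≤ (η/2) * a k * (∫ ζ : ℝ, ρ (ϑ * (ζ + y)) * (iteratedDeriv (k+1) z ζ)^2)
        + (1/2) * a 1 * (1/η + 1/2) * ∫ ζ : ℝ, ρ (ϑ * (ζ + y)) * (z ζ)^2 :=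
  weighted_interpolation_inequality_general ϑ hϑ y k η hη a ha0 hak1 hapos ρ hρ z hz hzint
end

section
/- Let ϑ > 0 and ρ(ζ) = 2/(2+ζ²), and let k ∈ {1,2}. There is a constant C > 0 such that for all z ∈ C^{k+1}_ub(ℝ): ‖z‖_{C^k_ub} ≤ C(‖z‖_{L^∞} + ‖z‖_{L^∞}^{1/5} sup_{y∈ℝ} ‖ρ(ϑ(·+y)) ∂_ζ^{k+1}z‖_{L²}^{4/5}). -/
/-!
By the mean value theorem, on every interval `[ζ, ζ + h]` there is a point where
`|g'| ≤ 2 sup |g| / h`, and the fundamental theorem of calculus bounds the variation of `g'`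
over the interval by `∫ |g''|`. For the top derivative `z^(k+1)` this integral is at most `√h`
times its local `L²` norm (Cauchy–Schwarz), and since the window `ρ(ϑ ·)` is bounded below by
`(1 + ϑ²)⁻¹` on unit intervals, that norm is controlled by the uniformly local quantity `S`. For
`k = 2` the same estimate with step `h / 8` absorbs `z'` into `z''`. Choosing
`h = min 1 ((‖z‖_∞ / S) ^ (2/5))` balances `‖z‖_∞ / h²` against `√h S` at `‖z‖_∞^(1/5) S^(4/5)`.
-/

open MeasureTheory Set Filter Topology

theorem abs_deriv_le_of_hasDerivAt {g g' g'' : ℝ → ℝ} (hg : ∀ t, HasDerivAt g (g' t) t)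
    (hg' : ∀ t, HasDerivAt g' (g'' t) t) (hg'' : Continuous g'') {B : ℝ}
    (hB : ∀ t, |g t| ≤ B) {h : ℝ} (hh : 0 < h) (ζ : ℝ) :
    |g' ζ| ≤ 2 * B / h + ∫ t in ζ..ζ + h, |g'' t| := by
  obtain ⟨ξ, hξ, hslope⟩ := exists_hasDerivAt_eq_slope g g' (lt_add_of_pos_right ζ hh)
    (fun t _ => (hg t).continuousAt.continuousWithinAt) fun t _ => hg t
  have hξ_le : |g' ξ| ≤ 2 * B / h := by
    rw [hslope, add_sub_cancel_left, abs_div, abs_of_pos hh]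
    gcongr
    linarith [abs_sub (g (ζ + h)) (g ζ), hB (ζ + h), hB ζ]
  have hvar : |g' ξ - g' ζ| ≤ ∫ t in ζ..ζ + h, |g'' t| := by
    rw [← intervalIntegral.integral_eq_sub_of_hasDerivAt (fun t _ => hg' t)
      (hg''.intervalIntegrable _ _)]
    exact (intervalIntegral.abs_integral_le_integral_abs hξ.1.le).trans
      (intervalIntegral.integral_mono_interval le_rfl hξ.1.le hξ.2.le
        (ae_of_all _ fun _ => abs_nonneg _) (hg''.abs.intervalIntegrable _ _))
  linarith [abs_sub_abs_le_abs_sub (g' ζ) (g' ξ), abs_sub_comm (g' ζ) (g' ξ)]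

theorem iSup_abs_deriv_le {g g' g'' : ℝ → ℝ} (hg : ∀ t, HasDerivAt g (g' t) t)
    (hg' : ∀ t, HasDerivAt g' (g'' t) t) (hg'' : Continuous g'')
    (hbdd : BddAbove (range fun t => |g t|)) {h E : ℝ} (hh : 0 < h)
    (hE : ∀ ζ, ∫ t in ζ..ζ + h, |g'' t| ≤ E) :
    ⨆ t, |g' t| ≤ 2 * (⨆ t, |g t|) / h + E :=
  ciSup_le fun ζ => (abs_deriv_le_of_hasDerivAt hg hg' hg'' (le_ciSup hbdd) hh ζ).trans
    (add_le_add le_rfl (hE ζ))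

theorem intervalIntegral_abs_le_mul_iSup {g : ℝ → ℝ} (hg : Continuous g)
    (hbdd : BddAbove (range fun t => |g t|)) {h : ℝ} (hh : 0 ≤ h) (ζ : ℝ) :
    ∫ t in ζ..ζ + h, |g t| ≤ h * ⨆ t, |g t| := by
  calc ∫ t in ζ..ζ + h, |g t| ≤ ∫ _ in ζ..ζ + h, ⨆ t, |g t| :=
        intervalIntegral.integral_mono_on (by linarith) (hg.abs.intervalIntegrable _ _)
          intervalIntegrable_const fun t _ => le_ciSup hbdd t
    _ = h * ⨆ t, |g t| := by simp

theorem sq_intervalIntegral_abs_le {w : ℝ → ℝ} (hw : Continuous w) {a b : ℝ} (hab : a ≤ b) :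
    (∫ t in a..b, |w t|) ^ 2 ≤ (b - a) * ∫ t in a..b, w t ^ 2 := by
  rcases hab.eq_or_lt with rfl | hlt
  · simp
  set J := ∫ t in a..b, |w t|
  set m := J / (b - a)
  have hexpand : ∫ t in a..b, (|w t| - m) ^ 2
      = (∫ t in a..b, w t ^ 2) - 2 * m * J + m ^ 2 * (b - a) := by
    have hpt : ∀ t, (|w t| - m) ^ 2 = w t ^ 2 - 2 * m * |w t| + m ^ 2 := fun t => by
      rw [sub_sq, sq_abs]; ring
    have hsq : IntervalIntegrable (fun t => w t ^ 2) volume a b :=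
      (by fun_prop : Continuous fun t => w t ^ 2).intervalIntegrable _ _
    have habs : IntervalIntegrable (fun t => 2 * m * |w t|) volume a b :=
      (by fun_prop : Continuous fun t => 2 * m * |w t|).intervalIntegrable _ _
    simp_rw [hpt]
    rw [intervalIntegral.integral_add (hsq.sub habs) intervalIntegrable_const,
      intervalIntegral.integral_sub hsq habs, intervalIntegral.integral_const_mul]
    simp [mul_comm, J]
  have hnonneg : 0 ≤ ∫ t in a..b, (|w t| - m) ^ 2 :=
    intervalIntegral.integral_nonneg hab fun t _ => sq_nonneg _
  have hba : 0 < b - a := sub_pos.2 hlt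
  have hscale : (b - a) * ((∫ t in a..b, w t ^ 2) - 2 * m * J + m ^ 2 * (b - a))
      = (b - a) * (∫ t in a..b, w t ^ 2) - J ^ 2 := by
    simp only [m]; field_simp; ring
  nlinarith [mul_nonneg hba.le (hexpand ▸ hnonneg)]

section Weighted

variable {φ w : ℝ → ℝ} {M : ℝ}

theorem sq_mul_le_sq_mul_sq_of_abs_le {a b : ℝ} (hb : |b| ≤ M) : (a * b) ^ 2 ≤ M ^ 2 * a ^ 2 := by
  rw [mul_pow, mul_comm]
  exact mul_le_mul_of_nonneg_right (sq_le_sq' (abs_le.1 hb).1 (abs_le.1 hb).2) (sq_nonneg a)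

theorem integrable_sq_shift_mul (hφ : Continuous φ) (hφ2 : Integrable fun x => φ x ^ 2)
    (hw : Continuous w) (hM : ∀ t, |w t| ≤ M) (y : ℝ) :
    Integrable fun t => (φ (t + y) * w t) ^ 2 := by
  refine ((hφ2.comp_add_right y).const_mul (M ^ 2)).mono' (by fun_prop) (ae_of_all _ fun t => ?_)
  rw [Real.norm_of_nonneg (sq_nonneg _)]
  exact sq_mul_le_sq_mul_sq_of_abs_le (hM t)

theorem bddAbove_range_sqrt_integral_sq_shift_mul (hφ : Continuous φ)
    (hφ2 : Integrable fun x => φ x ^ 2) (hw : Continuous w) (hM : ∀ t, |w t| ≤ M) :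
    BddAbove (range fun y => √(∫ t, (φ (t + y) * w t) ^ 2)) := by
  refine ⟨√(M ^ 2 * ∫ x, φ x ^ 2), forall_mem_range.2 fun y => Real.sqrt_le_sqrt ?_⟩
  calc ∫ t, (φ (t + y) * w t) ^ 2 ≤ ∫ t, M ^ 2 * φ (t + y) ^ 2 :=
        integral_mono (integrable_sq_shift_mul hφ hφ2 hw hM y)
          ((hφ2.comp_add_right y).const_mul _) fun t => sq_mul_le_sq_mul_sq_of_abs_le (hM t)
    _ = M ^ 2 * ∫ x, φ x ^ 2 := by
        rw [integral_const_mul, integral_add_right_eq_self fun x => φ x ^ 2]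

theorem intervalIntegral_sq_le_of_le_weight (hφ : Continuous φ)
    (hφ2 : Integrable fun x => φ x ^ 2) (hw : Continuous w) (hM : ∀ t, |w t| ≤ M)
    {c : ℝ} (hc : 0 < c) (hφc : ∀ x ∈ Icc 0 1, c ≤ φ x) {h : ℝ} (hh0 : 0 ≤ h) (hh1 : h ≤ 1)
    (ζ : ℝ) :
    ∫ t in ζ..ζ + h, w t ^ 2 ≤ ((⨆ y, √(∫ t, (φ (t + y) * w t) ^ 2)) / c) ^ 2 := by
  set S := ⨆ y, √(∫ t, (φ (t + y) * w t) ^ 2)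
  have hint := integrable_sq_shift_mul hφ hφ2 hw hM (-ζ)
  have hS : ∫ t, (φ (t + -ζ) * w t) ^ 2 ≤ S ^ 2 :=
    (Real.sqrt_le_iff.1 (le_ciSup (bddAbove_range_sqrt_integral_sq_shift_mul hφ hφ2 hw hM) (-ζ))).2
  have hpt : ∀ t ∈ Icc ζ (ζ + h), w t ^ 2 ≤ (φ (t + -ζ) * w t) ^ 2 / c ^ 2 := by
    intro t ht
    have hφt : c ≤ φ (t + -ζ) := hφc _ ⟨by linarith [ht.1], by linarith [ht.2]⟩
    rw [le_div_iff₀ (by positivity), mul_pow, mul_comm]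
    gcongr
  calc ∫ t in ζ..ζ + h, w t ^ 2 ≤ ∫ t in ζ..ζ + h, (φ (t + -ζ) * w t) ^ 2 / c ^ 2 :=
        intervalIntegral.integral_mono_on (by linarith)
          ((by fun_prop : Continuous fun t => w t ^ 2).intervalIntegrable _ _)
          ((by fun_prop : Continuous fun t => (φ (t + -ζ) * w t) ^ 2 / c ^ 2).intervalIntegrable
            _ _)
          hpt
    _ ≤ (∫ t, (φ (t + -ζ) * w t) ^ 2) / c ^ 2 := by
        rw [intervalIntegral.integral_div, intervalIntegral.integral_of_le (by linarith)]
        exact div_le_div_of_nonneg_right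
          (setIntegral_le_integral hint (ae_of_all _ fun _ => sq_nonneg _)) (sq_nonneg c)
    _ ≤ (S / c) ^ 2 := by
        rw [div_pow]
        gcongr

theorem intervalIntegral_abs_le_of_le_weight (hφ : Continuous φ)
    (hφ2 : Integrable fun x => φ x ^ 2) (hw : Continuous w) (hM : ∀ t, |w t| ≤ M)
    {c : ℝ} (hc : 0 < c) (hφc : ∀ x ∈ Icc 0 1, c ≤ φ x) {h : ℝ} (hh0 : 0 ≤ h) (hh1 : h ≤ 1)
    (ζ : ℝ) :
    ∫ t in ζ..ζ + h, |w t| ≤ c⁻¹ * (√h * ⨆ y, √(∫ t, (φ (t + y) * w t) ^ 2)) := by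
  set S := ⨆ y, √(∫ t, (φ (t + y) * w t) ^ 2)
  have hS : 0 ≤ S := Real.iSup_nonneg fun _ => Real.sqrt_nonneg _
  have hCS := sq_intervalIntegral_abs_le hw (le_add_of_nonneg_right hh0 : ζ ≤ ζ + h)
  rw [add_sub_cancel_left] at hCS
  calc ∫ t in ζ..ζ + h, |w t| ≤ √(h * (S / c) ^ 2) :=
        (le_abs_self _).trans <| Real.abs_le_sqrt <| hCS.trans <|
          mul_le_mul_of_nonneg_left
            (intervalIntegral_sq_le_of_le_weight hφ hφ2 hw hM hc hφc hh0 hh1 ζ) hh0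
    _ = c⁻¹ * (√h * S) := by
        rw [Real.sqrt_mul hh0, Real.sqrt_sq (by positivity)]
        ring

end Weighted

theorem le_of_forall_le_div_sq_add_sqrt_mul {A N S c : ℝ} (hc : 0 ≤ c) (hN : 0 ≤ N)
    (hS : 0 ≤ S) (hA : ∀ h ∈ Ioc (0 : ℝ) 1, A ≤ c * (N / h ^ 2 + √h * S)) :
    A ≤ 2 * c * (N + N ^ (1 / 5 : ℝ) * S ^ (4 / 5 : ℝ)) := by
  rcases hN.eq_or_lt with rfl | hNpos
  · have hlim : Tendsto (fun h => c * (0 / h ^ 2 + √h * S)) (𝓝[>] 0) (𝓝 0) := by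
      simp only [zero_div, zero_add]
      exact ((by fun_prop : Continuous fun h => c * (√h * S)).tendsto' 0 0 (by simp)).mono_left
        nhdsWithin_le_nhds
    rw [Real.zero_rpow (by norm_num), zero_mul, add_zero, mul_zero]
    exact ge_of_tendsto hlim (eventually_of_mem (Ioc_mem_nhdsGT zero_lt_one) hA)
  have hQ : 0 ≤ N ^ (1 / 5 : ℝ) * S ^ (4 / 5 : ℝ) := by positivity
  rcases le_or_gt S N with hSN | hNS
  · have := hA 1 ⟨zero_lt_one, le_rfl⟩
    simp only [one_pow, div_one, Real.sqrt_one, one_mul] at this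
    nlinarith
  -- with `N = a⁵`, `S = b⁵` the optimal step `h = (a / b)²` balances both terms at `a b⁴`
  set a := N ^ (1 / 5 : ℝ)
  set b := S ^ (1 / 5 : ℝ)
  have hfifth : ∀ {x : ℝ}, 0 ≤ x → (x ^ (1 / 5 : ℝ)) ^ 5 = x := fun hx => by
    rw [← Real.rpow_natCast, ← Real.rpow_mul hx]; norm_num
  have ha : 0 < a := by positivity
  have hab : a < b := Real.rpow_lt_rpow hN hNS (by norm_num)
  have hS4 : S ^ (4 / 5 : ℝ) = b ^ 4 := by
    rw [← Real.rpow_natCast, ← Real.rpow_mul hS]; norm_num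
  have hb : 0 < b := ha.trans hab
  have hh := hA ((a / b) ^ 2)
    ⟨by positivity, pow_le_one₀ (by positivity) ((div_le_one hb).2 hab.le)⟩
  rw [Real.sqrt_sq (by positivity), ← hfifth hN, ← hfifth hS] at hh
  rw [hS4]
  have hbal : a ^ 5 / ((a / b) ^ 2) ^ 2 + a / b * b ^ 5 = 2 * (a * b ^ 4) := by
    field_simp; ring
  rw [hbal] at hh
  nlinarith [pow_pos ha 5]

theorem iSup_abs_iteratedDeriv_succ_le {z : ℝ → ℝ} {n j : ℕ} (hz : ContDiff ℝ n z)
    (hj : j + 2 ≤ n) (hbdd : BddAbove (range fun t => |iteratedDeriv j z t|)) {h E : ℝ}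
    (hh : 0 < h) (hE : ∀ ζ, ∫ t in ζ..ζ + h, |iteratedDeriv (j + 2) z t| ≤ E) :
    ⨆ t, |iteratedDeriv (j + 1) z t| ≤ 2 * (⨆ t, |iteratedDeriv j z t|) / h + E := by
  have hderiv : ∀ i, i < n → ∀ t,
      HasDerivAt (iteratedDeriv i z) (iteratedDeriv (i + 1) z t) t := fun i hi t => by
    rw [iteratedDeriv_succ]
    exact (hz.differentiable_iteratedDeriv i (by exact_mod_cast hi) t).hasDerivAt
  exact iSup_abs_deriv_le (hderiv j (by omega)) (hderiv (j + 1) (by omega))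
    (hz.continuous_iteratedDeriv (j + 2) (by exact_mod_cast hj)) hbdd hh hE

theorem sum_range_two_iSup_abs_iteratedDeriv_le {z : ℝ → ℝ} (hz : ContDiff ℝ 2 z)
    (hbdd : BddAbove (range fun t => |z t|)) {K S : ℝ} (hK : 1 ≤ K) (hS : 0 ≤ S)
    (hloc : ∀ ζ h, 0 < h → h ≤ 1 → ∫ t in ζ..ζ + h, |iteratedDeriv 2 z t| ≤ K * (√h * S)) :
    ∑ j ∈ Finset.range 2, ⨆ t, |iteratedDeriv j z t|
      ≤ 5 * K * ((⨆ t, |z t|) + (⨆ t, |z t|) ^ (1 / 5 : ℝ) * S ^ (4 / 5 : ℝ)) := by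
  set N := ⨆ t, |z t|
  set D1 := ⨆ t, |iteratedDeriv 1 z t|
  have hN : 0 ≤ N := Real.iSup_nonneg fun _ => abs_nonneg _
  have hD1 : D1 ≤ 2 * (2 * K) * (N + N ^ (1 / 5 : ℝ) * S ^ (4 / 5 : ℝ)) :=
    le_of_forall_le_div_sq_add_sqrt_mul (by positivity) hN hS fun h ⟨h0, h1⟩ => by
      have hstep : D1 ≤ 2 * N / h + K * (√h * S) := by
        simpa only [zero_add, iteratedDeriv_zero] using
          iSup_abs_iteratedDeriv_succ_le (j := 0) hz le_rfl (by simpa using hbdd) h0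
            (hloc · h h0 h1)
      have hNh : 2 * N / h ≤ 2 * (N / h ^ 2) := by
        rw [mul_div_assoc]
        exact mul_le_mul_of_nonneg_left
          (div_le_div_of_nonneg_left hN (by positivity) (by nlinarith)) zero_le_two
      have hX : 0 ≤ N / h ^ 2 := by positivity
      have hY : 0 ≤ √h * S := by positivity
      linarith [mul_nonneg (sub_nonneg.2 hK) hX, mul_nonneg (zero_le_one.trans hK) hY]
  have hQ : 0 ≤ N ^ (1 / 5 : ℝ) * S ^ (4 / 5 : ℝ) := by positivity
  rw [Finset.sum_range_succ, Finset.sum_range_one, iteratedDeriv_zero]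
  nlinarith

theorem sum_range_three_iSup_abs_iteratedDeriv_le {z : ℝ → ℝ} (hz : ContDiff ℝ 3 z)
    (hbdd : ∀ j ≤ 2, BddAbove (range fun t => |iteratedDeriv j z t|)) {K S : ℝ} (hK : 1 ≤ K)
    (hS : 0 ≤ S)
    (hloc : ∀ ζ h, 0 < h → h ≤ 1 → ∫ t in ζ..ζ + h, |iteratedDeriv 3 z t| ≤ K * (√h * S)) :
    ∑ j ∈ Finset.range 3, ⨆ t, |iteratedDeriv j z t|
      ≤ 175 * K * ((⨆ t, |z t|) + (⨆ t, |z t|) ^ (1 / 5 : ℝ) * S ^ (4 / 5 : ℝ)) := by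
  set N := ⨆ t, |z t|
  set D1 := ⨆ t, |iteratedDeriv 1 z t|
  set D2 := ⨆ t, |iteratedDeriv 2 z t|
  have hN : 0 ≤ N := Real.iSup_nonneg fun _ => abs_nonneg _
  have hD1 : ∀ h > 0, D1 ≤ 2 * N / h + h * D2 := fun h h0 => by
    simpa only [zero_add, iteratedDeriv_zero] using
      iSup_abs_iteratedDeriv_succ_le (j := 0) hz (by norm_num) (hbdd 0 (by norm_num)) h0
        (intervalIntegral_abs_le_mul_iSup (hz.continuous_iteratedDeriv 2 (by norm_num))
          (hbdd 2 le_rfl) h0.le)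
  have hD2 : D2 ≤ 2 * (43 * K) * (N + N ^ (1 / 5 : ℝ) * S ^ (4 / 5 : ℝ)) :=
    le_of_forall_le_div_sq_add_sqrt_mul (by positivity) hN hS fun h ⟨h0, h1⟩ => by
      have hstep : D2 ≤ 2 * D1 / h + K * (√h * S) :=
        iSup_abs_iteratedDeriv_succ_le (j := 1) hz le_rfl (hbdd 1 (by norm_num)) h0
          (hloc · h h0 h1)
      have hD1h : 2 * D1 / h ≤ 32 * (N / h ^ 2) + D2 / 4 := by
        calc 2 * D1 / h ≤ 2 * (2 * N / (h / 8) + h / 8 * D2) / h :=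
              div_le_div_of_nonneg_right (by linarith [hD1 (h / 8) (by positivity)]) h0.le
          _ = 32 * (N / h ^ 2) + D2 / 4 := by field_simp; ring
      have hX : 0 ≤ N / h ^ 2 := by positivity
      have hY : 0 ≤ √h * S := by positivity
      linarith [mul_nonneg (sub_nonneg.2 hK) hX, mul_nonneg (zero_le_one.trans hK) hY]
  have hD1' : D1 ≤ 2 * N + D2 := by simpa using hD1 1 one_pos
  have hQ : 0 ≤ N ^ (1 / 5 : ℝ) * S ^ (4 / 5 : ℝ) := by positivity
  rw [Finset.sum_range_succ, Finset.sum_range_succ, Finset.sum_range_one, iteratedDeriv_zero]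
  nlinarith

theorem sum_iSup_abs_iteratedDeriv_le {k : ℕ} (hk : k = 1 ∨ k = 2) {z : ℝ → ℝ}
    (hz : ContDiff ℝ (k + 1 : ℕ) z)
    (hbdd : ∀ j ≤ k, BddAbove (range fun t => |iteratedDeriv j z t|)) {K S : ℝ} (hK : 1 ≤ K)
    (hS : 0 ≤ S) (hloc : ∀ ζ h, 0 < h → h ≤ 1 →
      ∫ t in ζ..ζ + h, |iteratedDeriv (k + 1) z t| ≤ K * (√h * S)) :
    ∑ j ∈ Finset.range (k + 1), ⨆ t, |iteratedDeriv j z t|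
      ≤ 175 * K * ((⨆ t, |z t|) + (⨆ t, |z t|) ^ (1 / 5 : ℝ) * S ^ (4 / 5 : ℝ)) := by
  rcases hk with rfl | rfl
  · have hQ : 0 ≤ (⨆ t, |z t|) + (⨆ t, |z t|) ^ (1 / 5 : ℝ) * S ^ (4 / 5 : ℝ) := by
      have := Real.iSup_nonneg fun t => abs_nonneg (z t)
      positivity
    exact (sum_range_two_iSup_abs_iteratedDeriv_le hz (by simpa using hbdd 0 zero_le_one) hK hS
      hloc).trans (mul_le_mul_of_nonneg_right (by linarith) hQ)
  · exact sum_range_three_iSup_abs_iteratedDeriv_le hz hbdd hK hS hloc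

theorem continuous_two_div_two_add_sq (ϑ : ℝ) :
    Continuous fun x : ℝ => 2 / (2 + (ϑ * x) ^ 2) :=
  continuous_const.div (by fun_prop) fun x => by positivity

theorem integrable_sq_two_div_two_add_sq {ϑ : ℝ} (hϑ : ϑ ≠ 0) :
    Integrable fun x : ℝ => (2 / (2 + (ϑ * x) ^ 2)) ^ 2 := by
  refine ((integrable_inv_one_add_sq.comp_mul_left' hϑ).const_mul 4).mono'
    ((continuous_two_div_two_add_sq ϑ).pow 2).aestronglyMeasurable (ae_of_all _ fun x => ?_)
  rw [Real.norm_of_nonneg (sq_nonneg _), div_pow, ← div_eq_mul_inv,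
    div_le_div_iff₀ (by positivity) (by positivity)]
  nlinarith [sq_nonneg (ϑ * x), sq_nonneg ((ϑ * x) ^ 2)]

theorem inv_one_add_sq_le_two_div_two_add_sq {ϑ x : ℝ} (hx : x ∈ Icc (0 : ℝ) 1) :
    (1 + ϑ ^ 2)⁻¹ ≤ 2 / (2 + (ϑ * x) ^ 2) := by
  rw [inv_eq_one_div, div_le_div_iff₀ (by positivity) (by positivity)]
  have : x ^ 2 ≤ 1 := pow_le_one₀ hx.1 hx.2
  nlinarith [sq_nonneg ϑ, mul_le_mul_of_nonneg_left this (sq_nonneg ϑ)]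

/-- Embedding estimate via uniformly local Sobolev quantities: for
`ϑ > 0`, `k ∈ {1,2}` and the window `ρ(ζ) = 2/(2+ζ²)` there is `C > 0` such that for all
`z ∈ C^{k+1}_ub(ℝ)`:
`‖z‖_{C^k} ≤ C(‖z‖_∞ + ‖z‖_∞^{1/5} sup_y ‖ρ(ϑ(·+y)) ∂^{k+1}z‖_{L²}^{4/5})`. -/
theorem uniformly_local_embedding
    (ϑ : ℝ) (hϑ : 0 < ϑ) (k : ℕ) (hk : k = 1 ∨ k = 2)
    (ρ : ℝ → ℝ) (hρ : ∀ ζ : ℝ, ρ ζ = 2 / (2 + ζ^2)) :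
    ∃ C > 0, ∀ z : ℝ → ℝ,
      ContDiff ℝ (↑(k+1)) z →
      (∀ j ≤ k+1, ∃ M : ℝ, ∀ ζ, |iteratedDeriv j z ζ| ≤ M) →
      (∀ j ≤ k+1, UniformContinuous (iteratedDeriv j z)) →
      ∑ j ∈ Finset.range (k+1), ⨆ ζ : ℝ, |iteratedDeriv j z ζ|
        ≤ C * ((⨆ ζ : ℝ, |z ζ|)
            + (⨆ ζ : ℝ, |z ζ|) ^ ((1:ℝ)/5) *
              (⨆ y : ℝ, Real.sqrt
                  (∫ ζ : ℝ, (ρ (ϑ * (ζ + y)) * iteratedDeriv (k+1) z ζ)^2)) ^ ((4:ℝ)/5)) := by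
  obtain rfl : ρ = fun ζ => 2 / (2 + ζ ^ 2) := funext hρ
  refine ⟨175 * (1 + ϑ ^ 2), by positivity, fun z hz hbdd _ => ?_⟩
  have hbdd' : ∀ j ≤ k, BddAbove (range fun t => |iteratedDeriv j z t|) := fun j hj =>
    let ⟨M, hM⟩ := hbdd j (by omega)
    ⟨M, forall_mem_range.2 hM⟩
  obtain ⟨M, hM⟩ := hbdd (k + 1) le_rfl
  refine sum_iSup_abs_iteratedDeriv_le hk hz hbdd'
    (le_add_of_nonneg_right (sq_nonneg ϑ)) (Real.iSup_nonneg fun _ => Real.sqrt_nonneg _)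
    fun ζ h h0 h1 => ?_
  have hloc := intervalIntegral_abs_le_of_le_weight
    (φ := fun x => 2 / (2 + (ϑ * x) ^ 2))
    (continuous_two_div_two_add_sq ϑ)
    (integrable_sq_two_div_two_add_sq hϑ.ne') (hz.continuous_iteratedDeriv (k + 1) le_rfl) hM
    (by positivity) (fun x hx => inv_one_add_sq_le_two_div_two_add_sq hx) h0.le h1 ζ
  rwa [inv_inv] at hloc
end

section
/- Let α > 0. There exists C > 0 such that for all t ≥ 0: ∫₀ᵗ (1/(1+t-s) + e^{-α(t-s)}) · (1/(1+s)) ds ≤ C · log(2+t)/(1+t). -/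
/-!
The exponential part of the kernel is dominated by the algebraic part, `e^{-αx} ≤ (1 + α⁻¹)/(1 + x)`,
so it suffices to bound the convolution of `(1 + s)⁻¹` with itself. Partial fractions,
`1/((1+t-s)(1+s)) = (1/(1+t-s) + 1/(1+s))/(2+t)`, evaluate that convolution exactly as
`2 log(1+t)/(2+t)`.
-/

open Real Set intervalIntegral

lemma exp_neg_mul_le_div_one_add {α x : ℝ} (hα : 0 < α) (hx : 0 ≤ x) :
    exp (-α * x) ≤ (1 + α⁻¹) / (1 + x) := by
  have hαx : 0 < 1 + α * x := by positivity
  calc exp (-α * x) = (exp (α * x))⁻¹ := by rw [neg_mul, exp_neg]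
    _ ≤ (1 + α * x)⁻¹ := inv_anti₀ hαx (by linarith [add_one_le_exp (α * x)])
    _ ≤ (1 + α⁻¹) / (1 + x) := by
      rw [inv_eq_one_div, div_le_div_iff₀ hαx (by linarith)]
      nlinarith [mul_inv_cancel₀ hα.ne', inv_pos.2 hα]

lemma one_add_pos_of_mem_uIcc {t s : ℝ} (ht : -1 < t) (hs : s ∈ uIcc 0 t) :
    0 < 1 + s ∧ 0 < 1 + t - s := by
  rcases le_total 0 t with h | h
  · rw [uIcc_of_le h] at hs; constructor <;> linarith [hs.1, hs.2]
  · rw [uIcc_of_ge h] at hs; constructor <;> linarith [hs.1, hs.2]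

lemma integral_one_div_one_add {t : ℝ} (ht : -1 < t) :
    ∫ s in (0:ℝ)..t, 1 / (1 + s) = log (1 + t) := by
  rw [integral_comp_add_left (fun u : ℝ => 1 / u), add_zero,
    integral_one_div (notMem_uIcc_of_lt one_pos (by linarith)), div_one]

lemma integral_one_div_one_add_sub {t : ℝ} (ht : -1 < t) :
    ∫ s in (0:ℝ)..t, 1 / (1 + t - s) = log (1 + t) := by
  simp only [add_sub_assoc]
  rw [integral_comp_sub_left (fun u : ℝ => 1 / (1 + u)), sub_self, sub_zero,
    integral_one_div_one_add ht]

lemma integral_one_div_one_add_sub_mul_one_div_one_add {t : ℝ} (ht : -1 < t) :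
    ∫ s in (0:ℝ)..t, 1 / (1 + t - s) * (1 / (1 + s)) = 2 * log (1 + t) / (2 + t) := by
  have hsplit : EqOn (fun s => 1 / (1 + t - s) * (1 / (1 + s)))
      (fun s => (1 / (2 + t)) * (1 / (1 + t - s) + 1 / (1 + s))) (uIcc 0 t) := by
    intro s hs
    obtain ⟨h₁, h₂⟩ := one_add_pos_of_mem_uIcc ht hs
    have h₃ : 2 + t ≠ 0 := by linarith
    field_simp
    ring
  rw [integral_congr hsplit, integral_const_mul, integral_add, integral_one_div_one_add_sub ht,
    integral_one_div_one_add ht]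
  · ring
  all_goals
    apply ContinuousOn.intervalIntegrable
    fun_prop (disch := intro s hs; have := one_add_pos_of_mem_uIcc ht hs; grind)

/-- The convolution estimate
`∫₀ᵗ ((1+t-s)⁻¹ + e^{-α(t-s)})(1+s)⁻¹ ds ≤ C log(2+t)/(1+t)`. -/
theorem convolution_estimate_log (α : ℝ) (hα : 0 < α) :
    ∃ C > 0, ∀ t : ℝ, 0 ≤ t →
      (∫ s in (0:ℝ)..t, (1 / (1 + t - s) + Real.exp (-α * (t - s))) * (1 / (1 + s)))
        ≤ C * Real.log (2 + t) / (1 + t) := by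
  refine ⟨2 * (2 + α⁻¹), by positivity, fun t ht => ?_⟩
  have ht' : -1 < t := by linarith
  have hkernel : ∀ s ∈ Icc 0 t, (1 / (1 + t - s) + exp (-α * (t - s))) * (1 / (1 + s))
      ≤ (2 + α⁻¹) * (1 / (1 + t - s) * (1 / (1 + s))) := by
    intro s hs
    have hexp := exp_neg_mul_le_div_one_add hα (sub_nonneg.2 hs.2)
    rw [← add_sub_assoc] at hexp
    calc _ ≤ (1 / (1 + t - s) + (1 + α⁻¹) / (1 + t - s)) * (1 / (1 + s)) := by
          gcongr
          exact one_div_nonneg.2 (by linarith [hs.1])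
      _ = _ := by ring
  have hlog : log (1 + t) / (2 + t) ≤ log (2 + t) / (1 + t) :=
    div_le_div₀ (log_nonneg (by linarith)) (log_le_log (by linarith) (by linarith))
      (by linarith) (by linarith)
  calc _ ≤ ∫ s in (0:ℝ)..t, (2 + α⁻¹) * (1 / (1 + t - s) * (1 / (1 + s))) := by
        refine integral_mono_on ht ?_ ?_ hkernel <;>
        · apply ContinuousOn.intervalIntegrable
          fun_prop (disch := intro s hs; have := one_add_pos_of_mem_uIcc ht' hs; grind)
    _ = (2 + α⁻¹) * (2 * log (1 + t) / (2 + t)) := by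
        rw [integral_const_mul, integral_one_div_one_add_sub_mul_one_div_one_add ht']
    _ ≤ (2 + α⁻¹) * (2 * (log (2 + t) / (1 + t))) := by
        rw [mul_div_assoc]
        gcongr
    _ = 2 * (2 + α⁻¹) * log (2 + t) / (1 + t) := by ring
end

section
/- There exists C > 0 such that for all t ≥ 0: ∫₀ᵗ (t-s)^{-1/2} (1+s)^{-1} ds ≤ C · log(2+t)/(1+t)^{1/2}, where the integral is interpreted as an improper integral convergent at s = t. -/
/-!
Split the integral at `s = t / 2`. On `[0, t/2]` the kernel is at most `(t/2)^{-1/2}`, which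
leaves `∫ (1+s)⁻¹ = log (1 + t/2)`; on `[t/2, t]` the weight is at most `(1 + t/2)⁻¹`, which
leaves `∫ (t-s)^{-1/2} = 2 (t/2)^{1/2}`. Both are `O(log (2+t) / √(1+t))` once `t ≥ 1`; for
`t ≤ 1` the crude bound `2 √t` suffices.
-/

open Real intervalIntegral MeasureTheory

section

variable {r t a : ℝ}

lemma intervalIntegrable_sub_rpow (hr : -1 < r) (a b : ℝ) :
    IntervalIntegrable (fun s => (t - s) ^ r) volume a b := by
  simpa using (intervalIntegrable_rpow' (a := t - a) (b := t - b) hr).comp_sub_left t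

lemma integral_sub_rpow (hr : -1 < r) :
    ∫ s in a..t, (t - s) ^ r = (t - a) ^ (r + 1) / (r + 1) := by
  rw [integral_comp_sub_left (fun x => x ^ r), sub_self, integral_rpow (Or.inl hr),
    zero_rpow (by linarith), sub_zero]

lemma integral_inv_one_add (ha : -1 < a) : ∫ s in 0..a, (1 + s)⁻¹ = log (1 + a) := by
  rw [integral_comp_add_left (fun x => x⁻¹), add_zero, integral_inv, div_one]
  rw [Set.mem_uIcc]
  rintro (⟨h, _⟩ | ⟨_, h⟩) <;> linarith

lemma intervalIntegrable_sub_rpow_mul_inv_one_add (hr : -1 < r) {b : ℝ} (ha : -1 < a)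
    (hb : -1 < b) : IntervalIntegrable (fun s => (t - s) ^ r * (1 + s)⁻¹) volume a b := by
  refine (intervalIntegrable_sub_rpow hr a b).mul_continuousOn (.inv₀ (by fun_prop) ?_)
  intro s hs
  rw [Set.mem_uIcc] at hs
  rcases hs with ⟨h, _⟩ | ⟨h, _⟩ <;> linarith

lemma integral_sub_rpow_mul_inv_one_add_le_rpow_mul_inv (hr : -1 < r) (ha : 0 ≤ a)
    (hat : a ≤ t) :
    ∫ s in a..t, (t - s) ^ r * (1 + s)⁻¹ ≤ (t - a) ^ (r + 1) / (r + 1) * (1 + a)⁻¹ := by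
  rw [← integral_sub_rpow hr, ← intervalIntegral.integral_mul_const]
  refine integral_mono_on hat (intervalIntegrable_sub_rpow_mul_inv_one_add hr (by linarith)
    (by linarith)) ((intervalIntegrable_sub_rpow hr a t).mul_const _) fun s hs => ?_
  exact mul_le_mul_of_nonneg_left (inv_anti₀ (by linarith) (by linarith [hs.1]))
    (rpow_nonneg (by linarith [hs.2]) _)

lemma integral_sub_rpow_mul_inv_one_add_le_rpow_mul_log (hr : r ≤ 0) (ha : 0 ≤ a)
    (hat : a < t) :
    ∫ s in 0..a, (t - s) ^ r * (1 + s)⁻¹ ≤ (t - a) ^ r * log (1 + a) := by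
  rw [← integral_inv_one_add (by linarith), ← intervalIntegral.integral_const_mul]
  have hcont : ContinuousOn (fun s => (t - s) ^ r) (Set.uIcc 0 a) :=
    .rpow_const (by fun_prop) fun s hs => Or.inl (by linarith [(Set.uIcc_of_le ha ▸ hs).2])
  refine integral_mono_on ha
    ((hcont.mul (.inv₀ (by fun_prop) fun s hs => ?_)).intervalIntegrable) ?_ fun s hs => ?_
  · linarith [(Set.uIcc_of_le ha ▸ hs).1]
  · exact (continuousOn_const.mul (.inv₀ (by fun_prop) fun s hs => by
      linarith [(Set.uIcc_of_le ha ▸ hs).1])).intervalIntegrable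
  · exact mul_le_mul_of_nonneg_right
      (rpow_le_rpow_of_nonpos (by linarith) (by linarith [hs.2]) hr)
      (inv_nonneg.2 (by linarith [hs.1]))

lemma half_lt_log_two_add (ht : 0 ≤ t) : 1 / 2 < log (2 + t) :=
  calc (1 / 2 : ℝ) < log 2 := by linarith [log_two_gt_d9]
    _ ≤ log (2 + t) := log_le_log (by norm_num) (by linarith)

lemma integral_sub_rpow_neg_half_mul_inv_one_add_le_two_sqrt (ht : 0 ≤ t) :
    ∫ s in 0..t, (t - s) ^ (-(1:ℝ)/2) * (1 + s)⁻¹ ≤ 2 * √t := by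
  have h := integral_sub_rpow_mul_inv_one_add_le_rpow_mul_inv (r := -(1:ℝ)/2) (by norm_num)
    le_rfl ht
  rw [sqrt_eq_rpow]
  norm_num at h
  linarith

lemma integral_sub_rpow_neg_half_mul_inv_one_add_le_log_div_sqrt_add (ht : 0 < t) :
    ∫ s in 0..t, (t - s) ^ (-(1:ℝ)/2) * (1 + s)⁻¹ ≤
      log (1 + t / 2) / √(t / 2) + 2 * √(t / 2) / (1 + t / 2) := by
  have hr : -1 < -(1:ℝ)/2 := by norm_num
  rw [← integral_add_adjacent_intervals
    (intervalIntegrable_sub_rpow_mul_inv_one_add hr (by norm_num) (by linarith) (b := t / 2))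
    (intervalIntegrable_sub_rpow_mul_inv_one_add hr (by linarith) (by linarith))]
  have h₁ := integral_sub_rpow_mul_inv_one_add_le_rpow_mul_log (by norm_num : -(1:ℝ)/2 ≤ 0)
    (by linarith : 0 ≤ t / 2) (by linarith : t / 2 < t)
  have h₂ := integral_sub_rpow_mul_inv_one_add_le_rpow_mul_inv hr (by linarith : 0 ≤ t / 2)
    (by linarith : t / 2 ≤ t)
  have e₁ : (t / 2) ^ (-(1:ℝ)/2) = (√(t / 2))⁻¹ := by
    rw [sqrt_eq_rpow, ← rpow_neg (by linarith)]; ring_nf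
  have e₂ : (t / 2) ^ (-(1:ℝ)/2 + 1) / (-(1:ℝ)/2 + 1) = 2 * √(t / 2) := by
    rw [sqrt_eq_rpow]; norm_num; ring
  rw [sub_half, e₁] at h₁
  rw [sub_half, e₂] at h₂
  rw [div_eq_inv_mul (log _), div_eq_mul_inv (2 * _)]
  exact add_le_add h₁ h₂

lemma two_sqrt_le_of_le_one (ht : 0 ≤ t) (h1 : t ≤ 1) :
    2 * √t ≤ 10 * log (2 + t) / √(1 + t) := by
  rw [le_div_iff₀ (sqrt_pos.2 (by linarith))]
  have hs : √t ≤ 1 := sqrt_le_one.mpr h1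
  have hs' : √(1 + t) ≤ 2 := sqrt_le_iff.mpr ⟨by norm_num, by linarith⟩
  nlinarith [half_lt_log_two_add ht, sqrt_nonneg t, sqrt_nonneg (1 + t)]

lemma log_div_sqrt_add_two_sqrt_div_le_of_one_le (ht : 1 ≤ t) :
    log (1 + t / 2) / √(t / 2) + 2 * √(t / 2) / (1 + t / 2) ≤
      10 * log (2 + t) / √(1 + t) := by
  set L := log (2 + t)
  have hL : 1 / 2 < L := half_lt_log_two_add (by linarith)
  have ha : 0 < √(1 + t) := sqrt_pos.2 (by linarith)
  have hb : 0 < √(t / 2) := sqrt_pos.2 (by linarith)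
  have ha2 := sq_sqrt (by linarith : (0:ℝ) ≤ 1 + t)
  have hb2 := sq_sqrt (by linarith : (0:ℝ) ≤ t / 2)
  have hab : √(1 + t) ≤ 2 * √(t / 2) := by nlinarith
  have hab' : √(1 + t) * √(t / 2) ≤ 2 * (1 + t / 2) := by nlinarith [mul_pos ha hb]
  have hlog : log (1 + t / 2) ≤ L := log_le_log (by linarith) (by linarith)
  have hlog0 : 0 ≤ log (1 + t / 2) := log_nonneg (by linarith)
  have h₁ : log (1 + t / 2) / √(t / 2) ≤ 2 * L / √(1 + t) := by
    rw [div_le_div_iff₀ hb ha]; nlinarith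
  have h₂ : 2 * √(t / 2) / (1 + t / 2) ≤ 8 * L / √(1 + t) := by
    rw [div_le_div_iff₀ (by linarith) ha]; nlinarith
  calc _ ≤ 2 * L / √(1 + t) + 8 * L / √(1 + t) := add_le_add h₁ h₂
    _ = 10 * L / √(1 + t) := by ring

end

/-- The convolution estimate
`∫₀ᵗ (t-s)^{-1/2}(1+s)⁻¹ ds ≤ C log(2+t)/(1+t)^{1/2}` (improper at `s = t`; here
`(t-s)^{-1/2}` is the real power, vanishing at `s = t`). -/
theorem convolution_estimate_sqrt :
    ∃ C > 0, ∀ t : ℝ, 0 ≤ t →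
      (∫ s in (0:ℝ)..t, (t - s) ^ (-(1:ℝ)/2) * (1 + s)⁻¹)
        ≤ C * Real.log (2 + t) / (1 + t) ^ ((1:ℝ)/2) := by
  refine ⟨10, by norm_num, fun t ht => ?_⟩
  rw [← sqrt_eq_rpow]
  rcases le_total t 1 with h | h
  · exact (integral_sub_rpow_neg_half_mul_inv_one_add_le_two_sqrt ht).trans
      (two_sqrt_le_of_le_one ht h)
  · exact (integral_sub_rpow_neg_half_mul_inv_one_add_le_log_div_sqrt_add (by linarith)).trans
      (log_div_sqrt_add_two_sqrt_div_le_of_one_le h)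
end
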